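/- The term rewriting system {Scp(SR(x)) → SR(Scp(x)), Scp(SR(x)) → SR(x), Scp(SR(x)) → x, Scp(SR(x)) → SR(Scp(Scp(x)))} over unary symbols Scp, SR is terminating. -/

import Mathlib

/-- The unary function symbols of the TRS encoding the forking diagrams for the
`(cp)` transformation. -/
inductive Sym16 : Type where
  | Scp : Sym16
  | SR : Sym16
  deriving DecidableEq

open Sym16 in
/-- The rules, as pairs (lhs, rhs) of strings of unary symbols. -/
def Rcp : List (List Sym16 × List Sym16) :=
  [([Scp, SR], [SR, Scp]),
   ([Scp, SR], [SR]),
   ([Scp, SR], []),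
   ([Scp, SR], [SR, Scp, Scp])]

/-- One rewrite step (terms are strings of unary symbols; rules apply at any
position). -/
def RewRcp (t u : List Sym16) : Prop :=
  ∃ pre tail lhs rhs, (lhs, rhs) ∈ Rcp ∧ t = pre ++ lhs ++ tail ∧ u = pre ++ rhs ++ tail

/-!
Weight each `Scp` by `3 ^ k`, where `k` is the number of `SR` below it. No rule increases the
number of `SR`, so the symbols above a redex never gain weight, while inside the redex `Scp SR`,
of weight `3 ^ (k + 1)`, becomes at most two copies of `Scp` of weight `3 ^ k` each. Hence every
step strictly decreases the total weight.
-/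

section CopyWeight

open Sym16

def copyWeight : List Sym16 → ℕ
  | [] => 0
  | SR :: w => copyWeight w
  | Scp :: w => 3 ^ w.count SR + copyWeight w

theorem copyWeight_append (u v : List Sym16) :
    copyWeight (u ++ v) = copyWeight u * 3 ^ v.count SR + copyWeight v := by
  induction u with
  | nil => simp [copyWeight]
  | cons a u ih =>
    cases a
    · simp only [List.cons_append, copyWeight, List.count_append, pow_add, ih]
      ring
    · simp only [List.cons_append, copyWeight, ih]

theorem copyWeight_append_lt_append {l r : List Sym16} (hc : r.count SR ≤ l.count SR)
    (hw : copyWeight r < copyWeight l) (pre tail : List Sym16) :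
    copyWeight (pre ++ r ++ tail) < copyWeight (pre ++ l ++ tail) := by
  have hpre : copyWeight pre * 3 ^ r.count SR + copyWeight r
      < copyWeight pre * 3 ^ l.count SR + copyWeight l :=
    Nat.add_lt_add_of_le_of_lt (Nat.mul_le_mul_left _ (Nat.pow_le_pow_right (by norm_num) hc)) hw
  simp only [copyWeight_append]
  exact Nat.add_lt_add_right (Nat.mul_lt_mul_of_pos_right hpre (by positivity)) _

theorem rcp_decreases_count_and_copyWeight :
    ∀ p ∈ Rcp, p.2.count SR ≤ p.1.count SR ∧ copyWeight p.2 < copyWeight p.1 := by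
  decide

theorem copyWeight_lt_of_rewRcp {t u : List Sym16} (h : RewRcp t u) :
    copyWeight u < copyWeight t := by
  obtain ⟨pre, tail, lhs, rhs, hrule, rfl, rfl⟩ := h
  obtain ⟨hc, hw⟩ := rcp_decreases_count_and_copyWeight _ hrule
  exact copyWeight_append_lt_append hc hw pre tail

end CopyWeight

/-- The TRS for the `(cp)` forking diagrams is terminating. -/
theorem stmt_16 : WellFounded (fun u t : List Sym16 => RewRcp t u) :=
  Subrelation.wf (fun h => copyWeight_lt_of_rewRcp h) (InvImage.wf copyWeight wellFounded_lt)
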